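/- Define the physicists' Hermite polynomials H_n by H_0(x) = 1, H_1(x) = 2x, and H_{n+1}(x) = 2x H_n(x) − H_n'(x). Let η > 0, let (p_1, p_2, p_3) ∈ ℕ³ with p = p_1 + p_2 + p_3, and let R ∈ ℝ³ with R ≠ 0. Then the function F(x) = ∫_η^∞ exp(−s²‖x‖²) ds is smooth on ℝ³ \ {0} and its iterated partial derivative satisfies ∂_1^{p_1} ∂_2^{p_2} ∂_3^{p_3} F(R) = ∫_η^∞ (−s)^p H_{p_1}(sR_1) H_{p_2}(sR_2) H_{p_3}(sR_3) exp(−s²‖R‖²) ds. -/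

import Mathlib

open scoped Real BigOperators

noncomputable section

/-- ℝ³ with the Euclidean norm. -/
abbrev E3 := EuclideanSpace ℝ (Fin 3)

/-- Degree `|p| = p₁ + p₂ + p₃` of a multi-index. -/
def deg (p : Fin 3 → ℕ) : ℕ := ∑ i, p i

/-- Partial derivative in the `i`-th coordinate direction. -/
def pd (i : Fin 3) (f : E3 → ℝ) : E3 → ℝ := fun x => fderiv ℝ f x (EuclideanSpace.single i 1)

/-- Iterated partial derivative `∂^p f` for a multi-index `p`. -/
def pdm (p : Fin 3 → ℕ) (f : E3 → ℝ) : E3 → ℝ :=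
  ((pd 0)^[p 0] ∘ (pd 1)^[p 1] ∘ (pd 2)^[p 2]) f

/-- The physicists' Hermite polynomials: `H₀ = 1` and `H_{n+1}(x) = 2x Hₙ(x) − Hₙ′(x)`
(so in particular `H₁(x) = 2x`). -/
def physHermite : ℕ → Polynomial ℝ
  | 0 => 1
  | n + 1 => 2 * Polynomial.X * physHermite n - Polynomial.derivative (physHermite n)

open MeasureTheory

set_option maxHeartbeats 1000000
set_option synthInstance.maxHeartbeats 1000000

private lemma hasDerivAt_h (n : ℕ) (s y : ℝ) :
    HasDerivAt (fun y => (physHermite n).eval (s*y) * Real.exp (-(s^2*y^2)))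
      (-s * ((physHermite (n+1)).eval (s*y) * Real.exp (-(s^2*y^2)))) y := by
  have h1 : HasDerivAt (fun y : ℝ => (physHermite n).eval (s*y))
      ((Polynomial.derivative (physHermite n)).eval (s*y) * s) y := by
    exact ((Polynomial.hasDerivAt (physHermite n) (s*y)).comp y
      ((hasDerivAt_id y).const_mul s)).congr_deriv (by ring)
  have h2 : HasDerivAt (fun y : ℝ => Real.exp (-(s^2*y^2)))
      (Real.exp (-(s^2*y^2)) * (-(s^2*(2*y)))) y := by
    have h3 : HasDerivAt (fun y : ℝ => -(s^2*y^2)) (-(s^2*(2*y))) y := by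
      exact ((hasDerivAt_pow 2 y).const_mul (s^2)).neg.congr_deriv (by norm_num)
    exact h3.exp
  refine (h1.mul h2).congr_deriv ?_
  show _ = _
  rw [show physHermite (n+1) = 2 * Polynomial.X * physHermite n
      - Polynomial.derivative (physHermite n) from rfl]
  simp only [Polynomial.eval_sub, Polynomial.eval_mul, Polynomial.eval_ofNat, Polynomial.eval_X]
  ring

private lemma norm_sq_eq (x : E3) : ‖x‖^2 = x 0^2 + x 1^2 + x 2^2 := by
  rw [EuclideanSpace.norm_eq, Real.sq_sqrt (by positivity)]
  simp [Fin.sum_univ_three, sq_abs]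

def gI (q : Fin 3 → ℕ) (x : E3) (s : ℝ) : ℝ :=
  (-s) ^ deg q * (physHermite (q 0)).eval (s * x 0) *
    (physHermite (q 1)).eval (s * x 1) * (physHermite (q 2)).eval (s * x 2) *
    Real.exp (-(s ^ 2 * ‖x‖ ^ 2))

private lemma gI_eq (q : Fin 3 → ℕ) (x : E3) (s : ℝ) :
    gI q x s = (-s)^(deg q) *
      (((physHermite (q 0)).eval (s*x 0) * Real.exp (-(s^2*(x 0)^2))) *
      (((physHermite (q 1)).eval (s*x 1) * Real.exp (-(s^2*(x 1)^2))) *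
       ((physHermite (q 2)).eval (s*x 2) * Real.exp (-(s^2*(x 2)^2))))) := by
  unfold gI
  rw [norm_sq_eq, show -(s^2*(x 0^2 + x 1^2 + x 2^2))
      = (-(s^2*(x 0)^2)) + ((-(s^2*(x 1)^2)) + (-(s^2*(x 2)^2))) by ring,
    Real.exp_add, Real.exp_add]
  ring

private lemma deg_add_single (q : Fin 3 → ℕ) (i : Fin 3) :
    deg (q + Pi.single i 1 : Fin 3 → ℕ) = deg q + 1 := by
  simp [deg, Finset.sum_add_distrib]

private lemma addSingle_same (q : Fin 3 → ℕ) (i : Fin 3) : (q + Pi.single i 1 : Fin 3 → ℕ) i = q i + 1 := by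
  simp
private lemma addSingle_ne (q : Fin 3 → ℕ) {i j : Fin 3} (h : j ≠ i) :
    (q + Pi.single i 1 : Fin 3 → ℕ) j = q j := by
  simp [Pi.single_eq_of_ne h]

private lemma hasFDerivAt_gI (q : Fin 3 → ℕ) (s : ℝ) (x : E3) :
    HasFDerivAt (fun x : E3 => gI q x s)
      (∑ i : Fin 3, gI (q + Pi.single i 1) x s • (EuclideanSpace.proj i : E3 →L[ℝ] ℝ)) x := by
  have proj : ∀ i : Fin 3, HasFDerivAt (fun x : E3 => x i)
      (EuclideanSpace.proj i : E3 →L[ℝ] ℝ) x :=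
    fun i => (EuclideanSpace.proj (𝕜 := ℝ) i).hasFDerivAt
  have h0 := (hasDerivAt_h (q 0) s (x 0)).comp_hasFDerivAt x (proj 0)
  have h1 := (hasDerivAt_h (q 1) s (x 1)).comp_hasFDerivAt x (proj 1)
  have h2 := (hasDerivAt_h (q 2) s (x 2)).comp_hasFDerivAt x (proj 2)
  have hprod := ((h0.mul (h1.mul h2)).const_mul ((-s)^(deg q)))
  have heq : (fun x : E3 => gI q x s) = fun x : E3 => (-s)^(deg q) *
      (((physHermite (q 0)).eval (s*x 0) * Real.exp (-(s^2*(x 0)^2))) *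
      (((physHermite (q 1)).eval (s*x 1) * Real.exp (-(s^2*(x 1)^2))) *
       ((physHermite (q 2)).eval (s*x 2) * Real.exp (-(s^2*(x 2)^2))))) :=
    funext fun x => gI_eq q x s
  rw [heq]
  refine hprod.congr_fderiv ?_
  ext v
  simp only [ContinuousLinearMap.coe_sum', Finset.sum_apply, ContinuousLinearMap.coe_smul',
    Pi.smul_apply, PiLp.proj_apply, smul_eq_mul, ContinuousLinearMap.add_apply, Function.comp,
    ContinuousLinearMap.coe_smul, Fin.sum_univ_three, Pi.mul_apply]
  rw [gI_eq, gI_eq, gI_eq]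
  have e0 := addSingle_same q 0
  have e1 := addSingle_same q 1
  have e2 := addSingle_same q 2
  rw [deg_add_single, deg_add_single, deg_add_single, e0, e1, e2,
    addSingle_ne q (show (1:Fin 3) ≠ 0 by decide), addSingle_ne q (show (2:Fin 3) ≠ 0 by decide),
    addSingle_ne q (show (0:Fin 3) ≠ 1 by decide), addSingle_ne q (show (2:Fin 3) ≠ 1 by decide),
    addSingle_ne q (show (0:Fin 3) ≠ 2 by decide), addSingle_ne q (show (1:Fin 3) ≠ 2 by decide)]
  rw [pow_succ]
  ring

private lemma continuous_gI (q : Fin 3 → ℕ) (x : E3) : Continuous (gI q x) := by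
  unfold gI
  have hP : ∀ (n : ℕ) (a : ℝ), Continuous fun s : ℝ => (physHermite n).eval (s * a) :=
    fun n a => (physHermite n).continuous.comp (continuous_id.mul continuous_const)
  exact ((((continuous_neg.pow _).mul (hP _ _)).mul (hP _ _)).mul (hP _ _)).mul
    (Real.continuous_exp.comp ((continuous_pow 2).mul continuous_const).neg)

private lemma abs_coord_le_norm (x : E3) (i : Fin 3) : |x i| ≤ ‖x‖ := by
  rw [EuclideanSpace.norm_eq, ← Real.sqrt_sq_eq_abs]
  apply Real.sqrt_le_sqrt
  have : x i ^ 2 = ‖x i‖ ^ 2 := by simp [sq_abs]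
  rw [this]
  exact Finset.single_le_sum (f := fun j => ‖x j‖ ^ 2) (fun j _ => by positivity)
    (Finset.mem_univ i)

private lemma integrable_pow_exp (m : ℕ) {b : ℝ} (hb : 0 < b) (η : ℝ) :
    IntegrableOn (fun s : ℝ => s ^ m * Real.exp (-(b * s ^ 2))) (Set.Ioi η) := by
  have h := integrable_rpow_mul_exp_neg_mul_sq hb (s := (m : ℝ))
    (by have : (0:ℝ) ≤ (m:ℝ) := Nat.cast_nonneg m; linarith)
  have h2 : (fun s : ℝ => s ^ (m : ℝ) * Real.exp (-b * s ^ 2))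
      = fun s : ℝ => s ^ m * Real.exp (-(b * s ^ 2)) := by
    funext s; rw [Real.rpow_natCast, neg_mul]
  rw [h2] at h
  exact h.integrableOn

private lemma poly_bound (P : Polynomial ℝ) :
    ∃ C : ℝ, 0 ≤ C ∧ ∀ y : ℝ, |P.eval y| ≤ C * (1 + |y|) ^ P.natDegree := by
  refine ⟨∑ j ∈ Finset.range (P.natDegree + 1), |P.coeff j|,
    Finset.sum_nonneg fun _ _ => abs_nonneg _, fun y => ?_⟩
  rw [Polynomial.eval_eq_sum_range, Finset.sum_mul]
  refine (Finset.abs_sum_le_sum_abs _ _).trans (Finset.sum_le_sum fun j hj => ?_)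
  rw [abs_mul, abs_pow]
  refine mul_le_mul_of_nonneg_left ?_ (abs_nonneg _)
  calc |y| ^ j ≤ (1 + |y|) ^ j :=
        pow_le_pow_left₀ (abs_nonneg _) (by linarith [abs_nonneg y]) _
    _ ≤ (1 + |y|) ^ P.natDegree :=
        pow_le_pow_right₀ (by linarith [abs_nonneg y]) (Nat.lt_succ_iff.mp (Finset.mem_range.mp hj))

/-- master bound for `gI` on a ball avoiding the origin -/
private lemma gI_bound (q : Fin 3 → ℕ) (x₀ : E3) (hx₀ : x₀ ≠ 0) {η : ℝ} (hη : 0 < η) :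
    ∃ (C : ℝ) (m : ℕ), 0 ≤ C ∧ ∀ s ∈ Set.Ioi η, ∀ x ∈ Metric.ball x₀ (‖x₀‖ / 2),
      |gI q x s| ≤ C * s ^ m * Real.exp (-((‖x₀‖ / 2) ^ 2 * s ^ 2)) := by
  set c : ℝ := ‖x₀‖ / 2 with hc
  have hcpos : 0 < c := by
    have : 0 < ‖x₀‖ := norm_pos_iff.mpr hx₀
    positivity
  obtain ⟨C0, hC0, hB0⟩ := poly_bound (physHermite (q 0))
  obtain ⟨C1, hC1, hB1⟩ := poly_bound (physHermite (q 1))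
  obtain ⟨C2, hC2, hB2⟩ := poly_bound (physHermite (q 2))
  set K : ℝ := 1 / η + 3 * c with hK
  have hKpos : 0 < K := by positivity
  set N0 := (physHermite (q 0)).natDegree
  set N1 := (physHermite (q 1)).natDegree
  set N2 := (physHermite (q 2)).natDegree
  refine ⟨C0 * C1 * C2 * K ^ (N0 + N1 + N2), deg q + (N0 + N1 + N2), by positivity,
    fun s hs x hx => ?_⟩
  have hs' : η < s := hs
  have hspos : 0 < s := hη.trans hs'
  -- norm bounds on the ball
  have hxl : c ≤ ‖x‖ := by
    have h1 : ‖x - x₀‖ < c := by simpa [dist_eq_norm] using hx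
    have h2 := norm_sub_norm_le x₀ x
    have : ‖x₀ - x‖ = ‖x - x₀‖ := norm_sub_rev _ _
    linarith [norm_sub_norm_le x₀ x, this ▸ h1]
  have hxu : ‖x‖ ≤ 3 * c := by
    have h1 : ‖x - x₀‖ < c := by simpa [dist_eq_norm] using hx
    have := norm_sub_norm_le x x₀
    have h3 : ‖x₀‖ = 2 * c := by rw [hc]; ring
    linarith
  -- bound each polynomial factor: |H(s * x i)| ≤ Cᵢ * (K*s)^Nᵢ
  have key : ∀ (i : Fin 3) (Ci : ℝ) (Ni : ℕ), 0 ≤ Ci →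
      (∀ y, |(physHermite (q i)).eval y| ≤ Ci * (1 + |y|) ^ Ni) →
      |(physHermite (q i)).eval (s * x i)| ≤ Ci * (K * s) ^ Ni := by
    intro i Ci Ni hCi hB
    refine (hB _).trans (mul_le_mul_of_nonneg_left (pow_le_pow_left₀ (by positivity) ?_ _) hCi)
    have h1 : |s * x i| ≤ s * (3 * c) := by
      rw [abs_mul, abs_of_pos hspos]
      exact mul_le_mul_of_nonneg_left ((abs_coord_le_norm x i).trans hxu) hspos.le
    have h2 : (1 : ℝ) ≤ s / η := (one_le_div hη).mpr hs'.le
    calc 1 + |s * x i| ≤ s / η + s * (3 * c) := by linarith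
      _ = K * s := by rw [hK]; ring
  have hexp : Real.exp (-(s ^ 2 * ‖x‖ ^ 2)) ≤ Real.exp (-(c ^ 2 * s ^ 2)) := by
    apply Real.exp_le_exp.mpr
    have : c ^ 2 ≤ ‖x‖ ^ 2 := pow_le_pow_left₀ hcpos.le hxl 2
    nlinarith [sq_nonneg s]
  have habs : |gI q x s| = s ^ deg q * |(physHermite (q 0)).eval (s * x 0)|
      * |(physHermite (q 1)).eval (s * x 1)| * |(physHermite (q 2)).eval (s * x 2)|
      * Real.exp (-(s ^ 2 * ‖x‖ ^ 2)) := by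
    unfold gI
    rw [abs_mul, abs_mul, abs_mul, abs_mul, abs_pow, abs_neg, abs_of_pos hspos,
      abs_of_pos (Real.exp_pos _)]
  rw [habs]
  have e0 := key 0 C0 N0 hC0 hB0
  have e1 := key 1 C1 N1 hC1 hB1
  have e2 := key 2 C2 N2 hC2 hB2
  calc s ^ deg q * |(physHermite (q 0)).eval (s * x 0)| * |(physHermite (q 1)).eval (s * x 1)|
        * |(physHermite (q 2)).eval (s * x 2)| * Real.exp (-(s ^ 2 * ‖x‖ ^ 2))
      ≤ s ^ deg q * (C0 * (K * s) ^ N0) * (C1 * (K * s) ^ N1) * (C2 * (K * s) ^ N2)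
        * Real.exp (-(c ^ 2 * s ^ 2)) := by
        gcongr
    _ = C0 * C1 * C2 * K ^ (N0 + N1 + N2) * s ^ (deg q + (N0 + N1 + N2))
        * Real.exp (-(c ^ 2 * s ^ 2)) := by
        rw [mul_pow, mul_pow, mul_pow, pow_add, pow_add, pow_add, pow_add]
        ring

private lemma integrableOn_gI (q : Fin 3 → ℕ) {η : ℝ} (hη : 0 < η) (x₀ : E3) (hx₀ : x₀ ≠ 0) :
    IntegrableOn (gI q x₀) (Set.Ioi η) := by
  obtain ⟨C, m, hC, hb⟩ := gI_bound q x₀ hx₀ hη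
  have hc : (0:ℝ) < (‖x₀‖ / 2) ^ 2 := by
    have : 0 < ‖x₀‖ := norm_pos_iff.mpr hx₀
    positivity
  refine Integrable.mono' (g := fun s => C * (s ^ m * Real.exp (-((‖x₀‖/2)^2 * s ^ 2))))
    ((integrable_pow_exp m hc η).const_mul C)
    (continuous_gI q x₀).aestronglyMeasurable ?_
  filter_upwards [ae_restrict_mem measurableSet_Ioi] with s hs
  have hball : x₀ ∈ Metric.ball x₀ (‖x₀‖ / 2) := Metric.mem_ball_self (by
    have : 0 < ‖x₀‖ := norm_pos_iff.mpr hx₀; linarith)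
  simpa [Real.norm_eq_abs, mul_assoc] using hb s hs x₀ hball

private lemma norm_proj_le (i : Fin 3) : ‖(EuclideanSpace.proj i : E3 →L[ℝ] ℝ)‖ ≤ 1 :=
  ContinuousLinearMap.opNorm_le_bound _ zero_le_one fun x => by
    simpa [Real.norm_eq_abs] using abs_coord_le_norm x i

private lemma hasFDerivAt_FI {η : ℝ} (hη : 0 < η) (q : Fin 3 → ℕ) (x₀ : E3) (hx₀ : x₀ ≠ 0) :
    HasFDerivAt (fun x : E3 => ∫ s in Set.Ioi η, gI q x s)
      (∑ i : Fin 3, (∫ s in Set.Ioi η, gI (q + Pi.single i 1) x₀ s) •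
        (EuclideanSpace.proj i : E3 →L[ℝ] ℝ)) x₀ := by
  have hnorm : 0 < ‖x₀‖ := norm_pos_iff.mpr hx₀
  have hcpos : 0 < ‖x₀‖ / 2 := by linarith
  have hc2 : (0:ℝ) < (‖x₀‖ / 2) ^ 2 := by positivity
  have hbd := fun i : Fin 3 => gI_bound (q + Pi.single i 1) x₀ hx₀ hη
  choose C m hC hb using hbd
  set F' : E3 → ℝ → (E3 →L[ℝ] ℝ) := fun x s =>
    ∑ i : Fin 3, gI (q + Pi.single i 1) x s • (EuclideanSpace.proj i : E3 →L[ℝ] ℝ) with hF'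
  have key : HasFDerivAt (fun x : E3 => ∫ s in Set.Ioi η, gI q x s)
      (∫ s in Set.Ioi η, F' x₀ s) x₀ := by
    apply hasFDerivAt_integral_of_dominated_of_fderiv_le (s := Metric.ball x₀ (‖x₀‖ / 2))
      (bound := fun s => ∑ i : Fin 3, C i * s ^ m i * Real.exp (-((‖x₀‖/2)^2 * s^2))) (Metric.ball_mem_nhds x₀ hcpos)
    · exact Filter.Eventually.of_forall fun x => (continuous_gI q x).aestronglyMeasurable
    · exact integrableOn_gI q hη x₀ hx₀
    · exact (Continuous.aestronglyMeasurable (by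
        exact continuous_finset_sum _ fun i _ => (continuous_gI _ x₀).smul continuous_const))
    · filter_upwards [ae_restrict_mem measurableSet_Ioi] with s hs
      intro x hx
      refine (norm_sum_le _ _).trans (Finset.sum_le_sum fun i _ => ?_)
      rw [norm_smul (gI (q + Pi.single i 1) x s) (EuclideanSpace.proj i : E3 →L[ℝ] ℝ)]
      calc ‖gI (q + Pi.single i 1) x s‖ * ‖(EuclideanSpace.proj i : E3 →L[ℝ] ℝ)‖
          ≤ (C i * s ^ m i * Real.exp (-((‖x₀‖/2)^2 * s^2))) * 1 := by
            apply mul_le_mul ?_ (norm_proj_le i) (norm_nonneg _)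
            · exact le_trans (abs_nonneg _) (hb i s hs x hx)
            · simpa [Real.norm_eq_abs] using hb i s hs x hx
        _ = C i * s ^ m i * Real.exp (-((‖x₀‖/2)^2 * s^2)) := mul_one _
    · apply integrable_finset_sum
      intro i _
      simpa [mul_assoc] using (integrable_pow_exp (m i) hc2 η).const_mul (C i)
    · filter_upwards [ae_restrict_mem measurableSet_Ioi] with s hs
      intro x hx
      exact hasFDerivAt_gI q s x
  simp only [hF'] at key
  have : (∫ s in Set.Ioi η, ∑ i : Fin 3, gI (q + Pi.single i 1) x₀ s •
      (EuclideanSpace.proj i : E3 →L[ℝ] ℝ)) = ∑ i : Fin 3,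
      (∫ s in Set.Ioi η, gI (q + Pi.single i 1) x₀ s) •
        (EuclideanSpace.proj i : E3 →L[ℝ] ℝ) := by
    have hint : ∀ i : Fin 3, Integrable (fun s => gI (q + Pi.single i 1) x₀ s •
        (EuclideanSpace.proj i : E3 →L[ℝ] ℝ)) (volume.restrict (Set.Ioi η)) :=
      fun i => (integrableOn_gI (q + Pi.single i 1) hη x₀ hx₀).smul_const _
    rw [integral_finset_sum (f := fun (i : Fin 3) s => gI (q + Pi.single i 1) x₀ s •
      (EuclideanSpace.proj i : E3 →L[ℝ] ℝ)) Finset.univ (fun i _ => hint i)]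
    exact Finset.sum_congr rfl fun i _ => integral_smul_const _ _
  rwa [this] at key

private lemma pd_FI {η : ℝ} (hη : 0 < η) (q : Fin 3 → ℕ) (i : Fin 3) (x : E3) (hx : x ≠ 0) :
    pd i (fun x => ∫ s in Set.Ioi η, gI q x s) x
      = ∫ s in Set.Ioi η, gI (q + Pi.single i 1) x s := by
  have h := hasFDerivAt_FI hη q x hx
  rw [pd, h.fderiv]
  simp only [ContinuousLinearMap.coe_sum', Finset.sum_apply, ContinuousLinearMap.coe_smul',
    Pi.smul_apply, PiLp.proj_apply, smul_eq_mul]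
  have : ∀ j : Fin 3, (EuclideanSpace.single i (1:ℝ)) j = if j = i then 1 else 0 := by
    intro j; rw [EuclideanSpace.single_apply]
  rw [Finset.sum_eq_single i]
  · rw [this i]; simp
  · intro j _ hj; rw [this j, if_neg hj, mul_zero]
  · intro h; exact absurd (Finset.mem_univ i) h

private lemma pd_congr (i : Fin 3) {f g : E3 → ℝ} (h : ∀ x : E3, x ≠ 0 → f x = g x)
    (x : E3) (hx : x ≠ 0) : pd i f x = pd i g x := by
  unfold pd
  congr 1
  apply Filter.EventuallyEq.fderiv_eq
  filter_upwards [IsOpen.mem_nhds isOpen_compl_singleton hx] with y hy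
  exact h y hy

private lemma pd_iter {η : ℝ} (hη : 0 < η) (i : Fin 3) (k : ℕ) :
    ∀ (q : Fin 3 → ℕ) (f : E3 → ℝ),
    (∀ x : E3, x ≠ 0 → f x = ∫ s in Set.Ioi η, gI q x s) →
    ∀ x : E3, x ≠ 0 → (pd i)^[k] f x = ∫ s in Set.Ioi η, gI (q + k • Pi.single i 1) x s := by
  induction k with
  | zero => intro q f hf x hx; simpa using hf x hx
  | succ k ih =>
    intro q f hf x hx
    rw [Function.iterate_succ_apply']
    have h1 : ∀ y : E3, y ≠ 0 → (pd i)^[k] f y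
        = ∫ s in Set.Ioi η, gI (q + k • Pi.single i 1) y s := ih q f hf
    rw [pd_congr i h1 x hx, pd_FI hη _ i x hx]
    congr 1
    rw [succ_nsmul, ← add_assoc]

/-- the complex parametric integral -/
private def Phi (η : ℝ) (z : ℂ) : ℂ := ∫ s in Set.Ioi η, Complex.exp (-(s:ℂ)^2 * z)

private lemma continuous_cexp (η : ℝ) (z : ℂ) :
    Continuous fun s : ℝ => Complex.exp (-(s:ℂ)^2 * z) :=
  Complex.continuous_exp.comp (((Complex.continuous_ofReal.pow 2).neg).mul continuous_const)

private lemma norm_cexp (s : ℝ) (z : ℂ) :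
    ‖Complex.exp (-(s:ℂ)^2 * z)‖ = Real.exp (-(s^2 * z.re)) := by
  rw [Complex.norm_exp]
  congr 1
  simp only [Complex.neg_re, Complex.neg_im, Complex.mul_re, ← Complex.ofReal_pow,
    Complex.ofReal_re, Complex.ofReal_im]
  ring

private lemma integrableOn_cexp {η : ℝ} (z : ℂ) (hz : 0 < z.re) :
    IntegrableOn (fun s : ℝ => Complex.exp (-(s:ℂ)^2 * z)) (Set.Ioi η) := by
  refine Integrable.mono' (g := fun s => s ^ 0 * Real.exp (-(z.re * s ^ 2)))
    (integrable_pow_exp 0 hz η) (continuous_cexp η z).aestronglyMeasurable ?_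
  filter_upwards [] with s
  rw [norm_cexp, pow_zero, one_mul]
  exact le_of_eq (by ring_nf)

private lemma hasDerivAt_Phi {η : ℝ} (z₀ : ℂ) (hz₀ : 0 < z₀.re) :
    HasDerivAt (Phi η) (∫ s in Set.Ioi η, -(s:ℂ)^2 * Complex.exp (-(s:ℂ)^2 * z₀)) z₀ := by
  set c : ℝ := z₀.re / 2 with hc
  have hcpos : 0 < c := by positivity
  refine (hasDerivAt_integral_of_dominated_loc_of_deriv_le (s := Metric.ball z₀ c)
    (F' := fun z s => -(s:ℂ)^2 * Complex.exp (-(s:ℂ)^2 * z))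
    (bound := fun s => s ^ 2 * Real.exp (-(c * s ^ 2))) (Metric.ball_mem_nhds z₀ hcpos)
    (Filter.Eventually.of_forall fun z => (continuous_cexp η z).aestronglyMeasurable)
    (integrableOn_cexp z₀ hz₀)
    (Continuous.aestronglyMeasurable (by
      exact ((Complex.continuous_ofReal.pow 2).neg).mul (continuous_cexp η z₀)))
    ?_ (integrable_pow_exp 2 hcpos η) ?_).2
  · filter_upwards [ae_restrict_mem measurableSet_Ioi] with s _
    intro z hz
    have hre : c ≤ z.re := by
      have h1 : |z.re - z₀.re| ≤ ‖z - z₀‖ := by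
        simpa using Complex.abs_re_le_norm (z - z₀)
      have h2 : ‖z - z₀‖ < c := by simpa [dist_eq_norm] using hz
      have := abs_le.mp (h1.trans h2.le)
      simp only [hc] at *
      linarith [this.1]
    rw [norm_mul, norm_cexp]
    have h3 : ‖-(s:ℂ)^2‖ = s ^ 2 := by
      rw [norm_neg, norm_pow, Complex.norm_real, Real.norm_eq_abs, sq_abs]
    rw [h3]
    refine mul_le_mul_of_nonneg_left ?_ (by positivity)
    apply Real.exp_le_exp.mpr
    nlinarith [sq_nonneg s]
  · filter_upwards [ae_restrict_mem measurableSet_Ioi] with s _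
    intro z _
    have : HasDerivAt (fun z : ℂ => -(s:ℂ)^2 * z) (-(s:ℂ)^2) z := by
      simpa using (hasDerivAt_id z).const_mul (-(s:ℂ)^2)
    simpa [mul_comm] using this.cexp

private lemma analyticOnNhd_Phi (η : ℝ) :
    AnalyticOnNhd ℂ (Phi η) {z : ℂ | 0 < z.re} := by
  apply DifferentiableOn.analyticOnNhd
  · intro z hz
    exact (hasDerivAt_Phi z hz).differentiableAt.differentiableWithinAt
  · exact isOpen_lt continuous_const Complex.continuous_re

/-- for real positive r, Phi recovers the real integral -/
private lemma Phi_re {η : ℝ} (r : ℝ) (hr : 0 < r) :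
    (Phi η (r : ℂ)).re = ∫ s in Set.Ioi η, Real.exp (-(s^2 * r)) := by
  rw [Phi, ← RCLike.re_to_complex, ← integral_re (integrableOn_cexp (r:ℂ) (by simpa using hr))]
  apply integral_congr_ae
  filter_upwards [] with s
  rw [RCLike.re_to_complex, show -((s:ℂ)^2) * (r:ℂ) = ((-(s^2*r) : ℝ) : ℂ) by push_cast; ring,
    ← Complex.ofReal_exp, Complex.ofReal_re]

private lemma analyticOnNhd_F {η : ℝ} (hη : 0 < η) :
    AnalyticOnNhd ℝ (fun x : E3 => ∫ s in Set.Ioi η, Real.exp (-(s ^ 2 * ‖x‖ ^ 2)))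
      ({0}ᶜ : Set E3) := by
  have hcomp : AnalyticOnNhd ℝ
      (fun x : E3 => (Phi η ((Complex.ofRealCLM (x 0 ^ 2 + x 1 ^ 2 + x 2 ^ 2)))).re)
      ({0}ᶜ : Set E3) := by
    intro x hx
    have hxne : x ≠ 0 := hx
    have hpos : 0 < ‖x‖ ^ 2 := by
      have : 0 < ‖x‖ := norm_pos_iff.mpr hxne
      positivity
    have a1 : AnalyticAt ℝ (fun x : E3 => x 0 ^ 2 + x 1 ^ 2 + x 2 ^ 2) x := by
      have h := fun i : Fin 3 => ((EuclideanSpace.proj i : E3 →L[ℝ] ℝ).analyticAt x).pow 2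
      exact ((h 0).add (h 1)).add (h 2)
    have a2 : AnalyticAt ℝ (fun y : ℝ => Complex.ofRealCLM y)
        (x 0 ^ 2 + x 1 ^ 2 + x 2 ^ 2) := Complex.ofRealCLM.analyticAt _
    have a3 : AnalyticAt ℝ (Phi η) (Complex.ofRealCLM (x 0 ^ 2 + x 1 ^ 2 + x 2 ^ 2)) := by
      have hmem : (Complex.ofRealCLM (x 0 ^ 2 + x 1 ^ 2 + x 2 ^ 2) : ℂ) ∈
          {z : ℂ | 0 < z.re} := by
        simp only [Complex.ofRealCLM_apply, Set.mem_setOf_eq, Complex.ofReal_re]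
        rw [← norm_sq_eq]; exact hpos
      exact (analyticOnNhd_Phi η _ hmem).restrictScalars
    have a4 : AnalyticAt ℝ (fun z : ℂ => z.re)
        (Phi η (Complex.ofRealCLM (x 0 ^ 2 + x 1 ^ 2 + x 2 ^ 2))) :=
      Complex.reCLM.analyticAt _
    have b1 : AnalyticAt ℝ (fun x : E3 => Complex.ofRealCLM (x 0 ^ 2 + x 1 ^ 2 + x 2 ^ 2)) x :=
      AnalyticAt.comp (f := fun x : E3 => x 0 ^ 2 + x 1 ^ 2 + x 2 ^ 2) a2 a1
    have b2 : AnalyticAt ℝ (fun x : E3 => Phi η (Complex.ofRealCLM (x 0 ^ 2 + x 1 ^ 2 + x 2 ^ 2))) x :=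
      AnalyticAt.comp (f := fun x : E3 => Complex.ofRealCLM (x 0 ^ 2 + x 1 ^ 2 + x 2 ^ 2)) a3 b1
    exact AnalyticAt.comp (f := fun x : E3 => Phi η (Complex.ofRealCLM (x 0 ^ 2 + x 1 ^ 2 + x 2 ^ 2))) a4 b2
  apply hcomp.congr isOpen_compl_singleton
  intro x hx
  have hxne : x ≠ 0 := hx
  have hpos : 0 < ‖x‖ ^ 2 := by
    have : 0 < ‖x‖ := norm_pos_iff.mpr hxne
    positivity
  show (Phi η (Complex.ofRealCLM (x 0 ^ 2 + x 1 ^ 2 + x 2 ^ 2))).re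
      = ∫ s in Set.Ioi η, Real.exp (-(s ^ 2 * ‖x‖ ^ 2))
  rw [show (x 0 ^ 2 + x 1 ^ 2 + x 2 ^ 2) = ‖x‖ ^ 2 from (norm_sq_eq x).symm]
  simp only [Complex.ofRealCLM_apply]
  rw [Phi_re (‖x‖ ^ 2) hpos]


/-- **Differentiation under the Ewald integral** (Appendix C): the function
`F(x) = ∫_η^∞ exp(−s²‖x‖²) ds` is smooth away from the origin, and its iterated partial
derivatives are obtained by differentiating the Gaussian integrand, producing the
Hermite-polynomial integrand. -/
theorem pdm_ewald_integral (η : ℝ) (hη : 0 < η) (p : Fin 3 → ℕ) (R : E3) (hR : R ≠ 0) :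
    ContDiffOn ℝ (⊤ : ℕ∞) (fun x : E3 => ∫ s in Set.Ioi η, Real.exp (-(s ^ 2 * ‖x‖ ^ 2)))
      ({0}ᶜ : Set E3) ∧
    pdm p (fun x : E3 => ∫ s in Set.Ioi η, Real.exp (-(s ^ 2 * ‖x‖ ^ 2))) R =
      ∫ s in Set.Ioi η,
        (-s) ^ deg p * (physHermite (p 0)).eval (s * R 0) *
          (physHermite (p 1)).eval (s * R 1) * (physHermite (p 2)).eval (s * R 2) *
          Real.exp (-(s ^ 2 * ‖R‖ ^ 2)) := by

  constructor
  · exact (analyticOnNhd_F hη).contDiffOn isOpen_compl_singleton.uniqueDiffOn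
  · have hf0 : ∀ x : E3, x ≠ 0 →
        (fun x : E3 => ∫ s in Set.Ioi η, Real.exp (-(s ^ 2 * ‖x‖ ^ 2))) x
          = ∫ s in Set.Ioi η, gI 0 x s := by
      intro x _
      simp [gI, deg, physHermite]
    have h2 := pd_iter hη 2 (p 2) 0 _ hf0
    have h1 := pd_iter hη 1 (p 1) _ _ h2
    have h0 := pd_iter hη 0 (p 0) _ _ h1
    have hrw : pdm p (fun x : E3 => ∫ s in Set.Ioi η, Real.exp (-(s ^ 2 * ‖x‖ ^ 2))) R
        = (pd 0)^[p 0] ((pd 1)^[p 1] ((pd 2)^[p 2]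
            (fun x : E3 => ∫ s in Set.Ioi η, Real.exp (-(s ^ 2 * ‖x‖ ^ 2))))) R := rfl
    rw [hrw, h0 R hR]
    have hQ : (0 : Fin 3 → ℕ) + p 2 • Pi.single 2 1 + p 1 • Pi.single 1 1
        + p 0 • Pi.single 0 1 = p := by
      funext j
      fin_cases j <;> simp [Pi.single_apply]
    rw [hQ]
    rfl
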